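/- arXiv:1709.09411 — 2 statements merged into one kernel-verified Lean document; each statement's English description precedes it below -/
import Mathlib

section
/- Substitution lemma for the combined dx-coefficient: let a(x,y) = a₀·x^i·y^j and b(x,y) = b₀·x^(i+1)·y^(j−1) with j ≥ 2, f ∈ ℂ, μ = k/m a positive rational. Then in a(x, f·x^μ + ȳ)dx + b(x, f·x^μ + ȳ)·d(f·x^μ + ȳ), the coefficient of x^(i+(j−t)μ)·ȳ^t·dx equals f^(j−t)·(C(j, j−t)·a₀ + μ·C(j−1, j−t−1)·b₀), for each 1 ≤ t ≤ j−1. -/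
open MvPolynomial

lemma coeff_aux (c : ℂ) (a b p q : ℕ) :
    MvPolynomial.coeff (Finsupp.single (0 : Fin 2) a + Finsupp.single 1 b)
      (C c * X (0 : Fin 2) ^ p * X 1 ^ q) = if p = a ∧ q = b then c else 0 := by
  have h : (C c * X (0 : Fin 2) ^ p * X 1 ^ q : MvPolynomial (Fin 2) ℂ)
      = monomial (Finsupp.single 0 p + Finsupp.single 1 q) c := by
    rw [X_pow_eq_monomial, X_pow_eq_monomial, C_apply, monomial_mul, monomial_mul]
    simp
  rw [h, coeff_monomial]
  congr 1
  simp only [eq_iff_iff]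
  constructor
  · intro h
    have h0 := DFunLike.congr_fun h 0
    have h1 := DFunLike.congr_fun h 1
    simp [Finsupp.single_apply] at h0 h1
    exact ⟨h0, h1⟩
  · rintro ⟨rfl, rfl⟩; rfl

/-- substitution lemma for the combined dx-coefficient.  With
`μ = k/m ≥ 1` written in the variable `z = x^(1/m)` (so `x^μ = z^k`,
`x = z^m`), the coefficient of `x^(i+(j−t)μ)·ȳ^t` in
`a₀·x^i·(f·x^μ+ȳ)^j + b₀·x^(i+1)·(f·x^μ+ȳ)^(j−1)·(k/m)·f·x^(μ−1)`
(the `dx`-coefficient of `a dx + b dy` after the change `y = f·x^μ + ȳ`) is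
`f^(j−t)·(C(j, j−t)·a₀ + (k/m)·C(j−1, j−t−1)·b₀)`. -/
theorem stmt_14 (a₀ b₀ f : ℂ) (i j t k m : ℕ)
    (hj : 2 ≤ j) (ht1 : 1 ≤ t) (ht2 : t ≤ j - 1) (hm : 1 ≤ m) (hk : m ≤ k) :
    MvPolynomial.coeff
        (Finsupp.single (0 : Fin 2) (i * m + (j - t) * k) + Finsupp.single 1 t)
        (C a₀ * X (0 : Fin 2) ^ (i * m) * (C f * X 0 ^ k + X 1) ^ j +
          C b₀ * X 0 ^ ((i + 1) * m) * (C f * X 0 ^ k + X 1) ^ (j - 1) *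
            C ((k : ℂ) / (m : ℂ)) * C f * X 0 ^ (k - m)) =
      f ^ (j - t) * (((j.choose (j - t)) : ℂ) * a₀ +
        ((k : ℂ) / (m : ℂ)) * (((j - 1).choose (j - t - 1)) : ℂ) * b₀) := by
  have hA : (C a₀ * X (0:Fin 2) ^ (i * m) * (C f * X 0 ^ k + X 1) ^ j
      : MvPolynomial (Fin 2) ℂ)
      = ∑ s ∈ Finset.range (j+1),
          C (a₀ * f ^ s * (j.choose s : ℂ)) * X 0 ^ (i*m + k*s) * X 1 ^ (j - s) := by
    rw [add_pow, Finset.mul_sum]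
    refine Finset.sum_congr rfl fun s _ => ?_
    rw [show ((j.choose s : ℕ) : MvPolynomial (Fin 2) ℂ) = C ((j.choose s : ℕ) : ℂ)
      from (map_natCast C _).symm]
    rw [map_mul, map_mul, map_pow]
    ring
  have hB : (C b₀ * X (0:Fin 2) ^ ((i + 1) * m) * (C f * X 0 ^ k + X 1) ^ (j - 1) *
        C ((k : ℂ) / (m : ℂ)) * C f * X 0 ^ (k - m) : MvPolynomial (Fin 2) ℂ)
      = ∑ s ∈ Finset.range j,
          C (b₀ * f ^ s * ((j-1).choose s : ℂ) * ((k:ℂ)/(m:ℂ)) * f)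
            * X 0 ^ ((i+1)*m + k*s + (k-m)) * X 1 ^ (j - 1 - s) := by
    rw [add_pow, show j - 1 + 1 = j by omega, Finset.mul_sum, Finset.sum_mul,
      Finset.sum_mul, Finset.sum_mul]
    refine Finset.sum_congr rfl fun s _ => ?_
    rw [show (((j-1).choose s : ℕ) : MvPolynomial (Fin 2) ℂ) = C (((j-1).choose s : ℕ) : ℂ)
      from (map_natCast C _).symm]
    rw [map_mul, map_mul, map_mul, map_mul, map_pow]
    ring
  rw [coeff_add, hA, hB, coeff_sum, coeff_sum]
  rw [Finset.sum_eq_single (j - t) (fun s hs hne => by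
      rw [coeff_aux, if_neg]
      rintro ⟨h1, h2⟩
      simp only [Finset.mem_range] at hs
      omega)
    (fun h => absurd (Finset.mem_range.2 (by omega)) h)]
  rw [Finset.sum_eq_single (j - 1 - t) (fun s hs hne => by
      rw [coeff_aux, if_neg]
      rintro ⟨h1, h2⟩
      simp only [Finset.mem_range] at hs
      omega)
    (fun h => absurd (Finset.mem_range.2 (by omega)) h)]
  rw [coeff_aux, coeff_aux, if_pos, if_pos]
  · rw [show j - t - 1 = j - 1 - t by omega,
      show j - t = (j - 1 - t) + 1 by omega, pow_succ]
    ring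
  · constructor
    · have h : (j - t) * k = k * (j - 1 - t) + k := by
        rw [show j - t = (j - 1 - t) + 1 by omega]; ring
      have h2 : (i + 1) * m = i * m + m := by ring
      omega
    · omega
  · exact ⟨by ring, by omega⟩
end

section
/- Let N be the Newton polygon of a finite set S of points in ℝ≥0 × ℝ≥0, let μ > 0, and let P = (i, j) be the highest point of N on the supporting line L_μ of co-slope μ, with j ≥ 2. Let 1 ≤ t ≤ j−1 and suppose Q = (i + (j−t)μ, t) also belongs to N. Then the segment from P to Q is contained in L_μ ∩ N, and the highest point of any supporting line L_{μ'} with μ' > μ has ordinate at most t. -/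
noncomputable def newtonPolygon (S : Set (ℝ × ℝ)) : Set (ℝ × ℝ) :=
  convexHull ℝ (⋃ p ∈ S, {q : ℝ × ℝ | p.1 ≤ q.1 ∧ p.2 ≤ q.2})

noncomputable def tau (N : Set (ℝ × ℝ)) (μ : ℝ) : ℝ :=
  sInf ((fun q : ℝ × ℝ => q.1 + μ * q.2) '' N)

lemma newtonPolygon_nonneg (S : Finset (ℝ × ℝ))
    (hpos : ∀ p ∈ S, 0 ≤ p.1 ∧ 0 ≤ p.2) :
    newtonPolygon (S : Set (ℝ × ℝ)) ⊆ {q : ℝ × ℝ | 0 ≤ q.1 ∧ 0 ≤ q.2} := by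
  apply convexHull_min
  · rintro x hx
    simp only [Set.mem_iUnion, Set.mem_setOf_eq] at hx ⊢
    obtain ⟨p, hpS, hp1, hp2⟩ := hx
    obtain ⟨h1, h2⟩ := hpos p hpS
    exact ⟨h1.trans hp1, h2.trans hp2⟩
  · intro x hx y hy a b ha hb hab
    simp only [Set.mem_setOf_eq] at hx hy ⊢
    constructor
    · have := add_nonneg (mul_nonneg ha hx.1) (mul_nonneg hb hy.1)
      simpa using this
    · have := add_nonneg (mul_nonneg ha hx.2) (mul_nonneg hb hy.2)
      simpa using this

lemma tau_le (S : Finset (ℝ × ℝ)) (hpos : ∀ p ∈ S, 0 ≤ p.1 ∧ 0 ≤ p.2)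
    (N : Set (ℝ × ℝ)) (hN : N = newtonPolygon (S : Set (ℝ × ℝ)))
    (μ : ℝ) (hμ : 0 ≤ μ) (p : ℝ × ℝ) (hp : p ∈ N) :
    tau N μ ≤ p.1 + μ * p.2 := by
  have hbdd : BddBelow ((fun q : ℝ × ℝ => q.1 + μ * q.2) '' N) := by
    refine ⟨0, ?_⟩
    rintro y ⟨q, hq, rfl⟩
    have hq' := newtonPolygon_nonneg S hpos (hN ▸ hq)
    exact add_nonneg hq'.1 (mul_nonneg hμ hq'.2)
  exact csInf_le hbdd ⟨p, hp, rfl⟩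

/-- if `P = (i,j)` is the highest point of the Newton polygon
`N` on the supporting line of co-slope μ, with `j ≥ 2`, `1 ≤ t ≤ j − 1`, and
`Q = (i + (j−t)μ, t)` also lies in `N`, then the whole segment `PQ` lies in
`N` on the supporting line, and every supporting line of co-slope `μ' > μ`
meets `N` only at ordinates ≤ t. -/
theorem stmt_19 (S : Finset (ℝ × ℝ)) (hS : S.Nonempty)
    (hpos : ∀ p ∈ S, 0 ≤ p.1 ∧ 0 ≤ p.2)
    (N : Set (ℝ × ℝ)) (hN : N = newtonPolygon (S : Set (ℝ × ℝ)))
    (μ : ℝ) (hμ : 0 < μ) (i j t : ℝ) (hj : 2 ≤ j) (ht1 : 1 ≤ t) (ht2 : t ≤ j - 1)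
    (hPN : (i, j) ∈ N) (hPline : i + μ * j = tau N μ)
    (hPtop : ∀ p ∈ N, p.1 + μ * p.2 = tau N μ → p.2 ≤ j)
    (hQN : (i + (j - t) * μ, t) ∈ N) :
    (∀ z ∈ segment ℝ (i, j) (i + (j - t) * μ, t),
        z ∈ N ∧ z.1 + μ * z.2 = tau N μ) ∧
      ∀ μ' : ℝ, μ < μ' → ∀ p ∈ N, p.1 + μ' * p.2 = tau N μ' → p.2 ≤ t := by
  have hconv : Convex ℝ N := hN ▸ convex_convexHull ℝ _
  constructor
  · intro z hz
    refine ⟨hconv.segment_subset hPN hQN hz, ?_⟩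
    obtain ⟨a, b, ha, hb, hab, rfl⟩ := hz
    simp only [Prod.smul_mk, Prod.mk_add_mk, smul_eq_mul]
    linear_combination hPline + (i + μ * j) * hab
  · intro μ' hμμ' p hp hpline
    have h1 : tau N μ' ≤ (i + (j - t) * μ) + μ' * t :=
      tau_le S hpos N hN μ' (le_of_lt (hμ.trans hμμ')) _ hQN
    have h2 : tau N μ ≤ p.1 + μ * p.2 := tau_le S hpos N hN μ hμ.le p hp
    nlinarith [hpline, hPline]
end
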